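/- (von Bahr–Esseen inequality, conditional version used for $p \in (1,2)$) Let $p \in [1,2]$ and let $X_1, \dots, X_n$ be independent real random variables with $\mathbb{E}|X_i|^p < \infty$ and $\mathbb{E}[X_i] = 0$ for each $i$. Then $\mathbb{E}\left|\sum_{i=1}^n X_i\right|^p \le 2 \sum_{i=1}^n \mathbb{E}|X_i|^p$. -/

import Mathlib

open MeasureTheory ProbabilityTheory Finset
open scoped ENNReal

/-! Write `ψ s = |s| ^ (p - 2) * s`, the derivative of `|s| ^ p / p`. For fixed `s`, the two sides
of `|s + x| ^ p ≤ |s| ^ p + p ψ(s) x + 2 |x| ^ p` agree at `x = 0`, and the derivative of their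
difference, `p (ψ s + 2 ψ x - ψ (s + x))`, has the sign of `x` because `ψ` is `(p - 1)`-Hölder
with constant `2`. Evaluated at an independent pair `S`, `X` with `X` centred, the middle term has
expectation `E[ψ S] E[X] = 0`, so `E|S + X| ^ p ≤ E|S| ^ p + 2 E|X| ^ p`; induction on the number
of summands gives the theorem. -/

namespace Real

lemma rpow_sub_rpow_le_abs_sub_rpow {a b q : ℝ} (ha : 0 ≤ a) (hb : 0 ≤ b) (hq0 : 0 ≤ q)
    (hq1 : q ≤ 1) : a ^ q - b ^ q ≤ |a - b| ^ q := by
  rcases le_total a b with hab | hba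
  · linarith [rpow_le_rpow ha hab hq0, rpow_nonneg (abs_nonneg (a - b)) q]
  · have h := rpow_add_le_add_rpow hb (sub_nonneg.2 hba) hq0 hq1
    rw [add_sub_cancel, ← abs_of_nonneg (sub_nonneg.2 hba)] at h
    linarith

lemma abs_rpow_sub_two_mul_self_of_nonneg {p a : ℝ} (hp : 1 < p) (ha : 0 ≤ a) :
    |a| ^ (p - 2) * a = a ^ (p - 1) := by
  rcases ha.eq_or_lt with rfl | ha
  · simp [zero_rpow (by linarith : p - 1 ≠ 0)]
  · rw [abs_of_pos ha, ← rpow_add_one ha.ne']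
    ring_nf

lemma abs_rpow_sub_two_mul_self_of_nonpos {p a : ℝ} (hp : 1 < p) (ha : a ≤ 0) :
    |a| ^ (p - 2) * a = -(-a) ^ (p - 1) := by
  rw [← abs_rpow_sub_two_mul_self_of_nonneg hp (neg_nonneg.2 ha), abs_neg, mul_neg, neg_neg]

lemma abs_abs_rpow_sub_two_mul_self_le (p a : ℝ) :
    |(|a| ^ (p - 2) * a)| ≤ |a| ^ (p - 1) := by
  rw [abs_mul, abs_of_nonneg (rpow_nonneg (abs_nonneg a) _)]
  rcases eq_or_ne a 0 with rfl | ha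
  · simpa using rpow_nonneg le_rfl (p - 1)
  · rw [← rpow_add_one (abs_ne_zero.2 ha)]
    ring_nf
    rfl

lemma abs_rpow_sub_two_mul_self_sub_le {p : ℝ} (hp1 : 1 < p) (hp2 : p ≤ 2) (a b : ℝ) :
    |a| ^ (p - 2) * a - |b| ^ (p - 2) * b ≤ 2 * |a - b| ^ (p - 1) := by
  have hq0 : 0 ≤ p - 1 := by linarith
  have hq1 : p - 1 ≤ 1 := by linarith
  have hnn := rpow_nonneg (abs_nonneg (a - b)) (p - 1)
  rcases le_total 0 a with ha | ha <;> rcases le_total 0 b with hb | hb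
  · rw [abs_rpow_sub_two_mul_self_of_nonneg hp1 ha, abs_rpow_sub_two_mul_self_of_nonneg hp1 hb]
    linarith [rpow_sub_rpow_le_abs_sub_rpow ha hb hq0 hq1]
  · rw [abs_rpow_sub_two_mul_self_of_nonneg hp1 ha, abs_rpow_sub_two_mul_self_of_nonpos hp1 hb,
      abs_of_nonneg (by linarith : 0 ≤ a - b)]
    linarith [rpow_le_rpow ha (by linarith : a ≤ a - b) hq0,
      rpow_le_rpow (neg_nonneg.2 hb) (by linarith : -b ≤ a - b) hq0]
  · rw [abs_rpow_sub_two_mul_self_of_nonpos hp1 ha, abs_rpow_sub_two_mul_self_of_nonneg hp1 hb]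
    linarith [rpow_nonneg (neg_nonneg.2 ha) (p - 1), rpow_nonneg hb (p - 1)]
  · rw [abs_rpow_sub_two_mul_self_of_nonpos hp1 ha, abs_rpow_sub_two_mul_self_of_nonpos hp1 hb]
    have h := rpow_sub_rpow_le_abs_sub_rpow (neg_nonneg.2 hb) (neg_nonneg.2 ha) hq0 hq1
    rw [show -b - -a = a - b by ring] at h
    linarith

theorem abs_add_rpow_le {p : ℝ} (hp1 : 1 ≤ p) (hp2 : p ≤ 2) (s x : ℝ) :
    |s + x| ^ p ≤ |s| ^ p + p * (|s| ^ (p - 2) * s) * x + 2 * |x| ^ p := by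
  rcases hp1.eq_or_lt with rfl | hp1
  · have h := abs_abs_rpow_sub_two_mul_self_le 1 s
    rw [sub_self, rpow_zero] at h
    have := abs_le.1 ((abs_mul _ x).trans_le (mul_le_of_le_one_left (abs_nonneg x) h))
    simp only [rpow_one]
    linarith [abs_add_le s x]
  set f : ℝ → ℝ := fun y => |s| ^ p + p * (|s| ^ (p - 2) * s) * y + 2 * |y| ^ p - |s + y| ^ p
  set f' : ℝ → ℝ := fun y =>
    p * (|s| ^ (p - 2) * s + 2 * (|y| ^ (p - 2) * y) - |s + y| ^ (p - 2) * (s + y))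
  have hf' : ∀ y, HasDerivAt f (f' y) y := by
    intro y
    have h := (((hasDerivAt_id y).const_mul (p * (|s| ^ (p - 2) * s))).const_add (|s| ^ p)).add
      ((hasDerivAt_abs_rpow y hp1).const_mul 2) |>.sub
      ((hasDerivAt_abs_rpow (s + y) hp1).comp y ((hasDerivAt_id y).const_add s))
    exact h.congr_deriv (by ring)
  have hcont : Continuous f := continuous_iff_continuousAt.2 fun y => (hf' y).continuousAt
  have hf0 : f 0 = 0 := by simp [f, zero_rpow (by linarith : p ≠ 0)]
  have hp0 : 0 < p := by linarith
  suffices 0 ≤ f x by simp only [f] at this; linarith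
  rcases le_total 0 x with hx | hx
  · refine hf0 ▸ monotoneOn_of_hasDerivWithinAt_nonneg (convex_Ici 0) hcont.continuousOn
      (fun y _ => (hf' y).hasDerivWithinAt) (fun y hy => ?_) Set.self_mem_Ici hx hx
    rw [interior_Ici, Set.mem_Ioi] at hy
    have h := abs_rpow_sub_two_mul_self_sub_le hp1 hp2 (s + y) s
    rw [add_sub_cancel_left, abs_of_pos hy] at h
    have hψy := abs_rpow_sub_two_mul_self_of_nonneg hp1 hy.le
    exact mul_nonneg hp0.le (by linarith)
  · refine hf0 ▸ antitoneOn_of_hasDerivWithinAt_nonpos (convex_Iic 0) hcont.continuousOn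
      (fun y _ => (hf' y).hasDerivWithinAt) (fun y hy => ?_) hx Set.self_mem_Iic hx
    rw [interior_Iic, Set.mem_Iio] at hy
    have h := abs_rpow_sub_two_mul_self_sub_le hp1 hp2 s (s + y)
    rw [sub_add_cancel_left, abs_neg, abs_of_neg hy] at h
    have hψy := abs_rpow_sub_two_mul_self_of_nonpos hp1 hy.le
    exact mul_nonpos_of_nonneg_of_nonpos hp0.le (by linarith)

end Real

section
variable {Ω : Type*} [MeasurableSpace Ω] {P : Measure Ω} [IsFiniteMeasure P] {p : ℝ}

lemma MeasureTheory.MemLp.integrable_abs_rpow {f : Ω → ℝ} (hp : 0 ≤ p)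
    (hf : MemLp f (ENNReal.ofReal p) P) :
    Integrable (fun ω => |f ω| ^ p) P := by
  simpa [ENNReal.toReal_ofReal hp] using hf.integrable_norm_rpow'

theorem integral_abs_add_rpow_le (hp1 : 1 ≤ p) (hp2 : p ≤ 2) {S X : Ω → ℝ}
    (hS : MemLp S (ENNReal.ofReal p) P) (hX : MemLp X (ENNReal.ofReal p) P)
    (hSX : IndepFun S X P) (hX0 : ∫ ω, X ω ∂P = 0) :
    ∫ ω, |S ω + X ω| ^ p ∂P ≤ ∫ ω, |S ω| ^ p ∂P + 2 * ∫ ω, |X ω| ^ p ∂P := by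
  set ψ : ℝ → ℝ := fun s => |s| ^ (p - 2) * s
  have hψ : Measurable ψ := (measurable_abs.pow_const _).mul measurable_id
  have hψS : Integrable (ψ ∘ S) P :=
    ((hS.mono_exponent (ENNReal.ofReal_le_ofReal (by linarith : p - 1 ≤ p))).integrable_abs_rpow
      (by linarith)).mono' (hψ.comp_aemeasurable hS.1.aemeasurable).aestronglyMeasurable
      (ae_of_all _ fun ω => Real.abs_abs_rpow_sub_two_mul_self_le p (S ω))
  have hXint : Integrable X P := hX.integrable (ENNReal.one_le_ofReal.2 hp1)
  have hψSX : IndepFun (ψ ∘ S) X P := hSX.comp hψ measurable_id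
  have hψSX_int : Integrable (fun ω => p * (ψ (S ω) * X ω)) P :=
    (hψSX.integrable_mul hψS hXint).const_mul p
  have hψSX_zero : ∫ ω, p * (ψ (S ω) * X ω) ∂P = 0 := by
    have h : ∫ ω, ψ (S ω) * X ω ∂P = (∫ ω, ψ (S ω) ∂P) * ∫ ω, X ω ∂P :=
      hψSX.integral_fun_mul_eq_mul_integral hψS.1 hXint.1
    rw [integral_const_mul, h, hX0, mul_zero, mul_zero]
  have hSp := hS.integrable_abs_rpow (by linarith)
  have hXp := (hX.integrable_abs_rpow (by linarith)).const_mul 2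
  have hSψ : Integrable (fun ω => |S ω| ^ p + p * (ψ (S ω) * X ω)) P := hSp.add hψSX_int
  calc ∫ ω, |S ω + X ω| ^ p ∂P
      ≤ ∫ ω, |S ω| ^ p + p * (ψ (S ω) * X ω) + 2 * |X ω| ^ p ∂P :=
        integral_mono_of_nonneg (ae_of_all _ fun ω => by positivity) (hSψ.add hXp)
          (ae_of_all _ fun ω => by linarith [Real.abs_add_rpow_le hp1 hp2 (S ω) (X ω)])
    _ = ∫ ω, |S ω| ^ p ∂P + 2 * ∫ ω, |X ω| ^ p ∂P := by
        rw [integral_add hSψ hXp, integral_add hSp hψSX_int, hψSX_zero,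
          integral_const_mul, add_zero]

theorem integral_abs_sum_rpow_le (hp1 : 1 ≤ p) (hp2 : p ≤ 2) {ι : Type*} {X : ι → Ω → ℝ}
    (hindep : iIndepFun X P) (hLp : ∀ i, MemLp (X i) (ENNReal.ofReal p) P)
    (hmean : ∀ i, ∫ ω, X i ω ∂P = 0) (s : Finset ι) :
    ∫ ω, |∑ i ∈ s, X i ω| ^ p ∂P ≤ 2 * ∑ i ∈ s, ∫ ω, |X i ω| ^ p ∂P := by
  classical
  induction s using Finset.induction_on with
  | empty => simp [Real.zero_rpow (by linarith : p ≠ 0)]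
  | insert i s hi ih =>
    have hstep := integral_abs_add_rpow_le hp1 hp2 (memLp_finsetSum' s fun j _ => hLp j) (hLp i)
      (hindep.indepFun_finsetSum_of_notMem₀ (fun j => (hLp j).1.aemeasurable) hi) (hmean i)
    simp only [Finset.sum_apply] at hstep
    have hsum (ω : Ω) : ∑ j ∈ insert i s, X j ω = ∑ j ∈ s, X j ω + X i ω := by
      rw [sum_insert hi, add_comm]
    simp only [hsum, sum_insert hi]
    linarith
end

/-- The von Bahr–Esseen inequality: for independent centred random variables with finite
`p`-th moments, `p ∈ [1,2]`, `E|∑ Xᵢ|^p ≤ 2 ∑ E|Xᵢ|^p`. -/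
theorem vonBahr_Esseen {Ω : Type*} [MeasurableSpace Ω] (P : Measure Ω)
    [IsProbabilityMeasure P] (p : ℝ) (hp1 : 1 ≤ p) (hp2 : p ≤ 2)
    (n : ℕ) (X : Fin n → Ω → ℝ)
    (hindep : iIndepFun X P)
    (hLp : ∀ i, MemLp (X i) (ENNReal.ofReal p) P)
    (hmean : ∀ i, ∫ ω, X i ω ∂P = 0) :
    ∫ ω, |∑ i, X i ω| ^ p ∂P ≤ 2 * ∑ i, ∫ ω, |X i ω| ^ p ∂P :=
  integral_abs_sum_rpow_le hp1 hp2 hindep hLp hmean univ
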